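/- arXiv:1805.12448 — 4 statements merged into one kernel-verified Lean document; each statement's English description precedes it below -/
import Mathlib

section
/- Let α > 1, k > 0, and let φ : [0,∞) → [0,∞) be increasing, differentiable, with φ(0) = 0, φ'(s)²(1 + α²k²φ(s)^{2α-2}) = 1 for all s ≥ 0, and lim_{s→∞} φ(s) = ∞. Then lim_{s→∞} s^{-1/α} φ(s) = k^{-1/α}. -/
open Real Filter Set Asymptotics Topology

/-! With `u = k α φ^(α-1)` the equation says `φ' = 1 / √(1 + u²)`, so
`(k φ^α)' = u / √(1 + u²)`, which tends to `1` because `u → ∞`. By the mean value theorem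
`k φ(s)^α / s → 1`, and taking `α`-th roots gives the claim. -/

lemma isLittleO_id_atTop_of_hasDerivAt_of_tendsto_zero {g g' : ℝ → ℝ}
    (hg : ∀ᶠ x in atTop, HasDerivAt g (g' x) x) (hg' : Tendsto g' atTop (𝓝 0)) :
    g =o[atTop] id := by
  refine isLittleO_iff.2 fun c hc => ?_
  obtain ⟨S, hS⟩ := eventually_atTop.1 <|
    hg.and (hg'.eventually (Metric.closedBall_mem_nhds 0 (half_pos hc)))
  have hmvt : ∀ x ≥ S, ‖g x - g S‖ ≤ c / 2 * ‖x - S‖ := fun x hx =>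
    (convex_Ici S).norm_image_sub_le_of_norm_hasDerivWithin_le
      (fun y hy => (hS y hy).1.hasDerivWithinAt)
      (fun y hy => by simpa using (hS y hy).2) self_mem_Ici hx
  filter_upwards [eventually_ge_atTop S, eventually_ge_atTop (2 / c * ‖g S‖ + ‖S‖)]
    with x hxS hx
  have hx0 : 0 ≤ x := le_trans (by positivity) hx
  calc ‖g x‖ ≤ ‖g x - g S‖ + ‖g S‖ := norm_le_norm_sub_add _ _
    _ ≤ c / 2 * (‖x‖ + ‖S‖) + ‖g S‖ := by
      gcongr
      exact (hmvt x hxS).trans (by gcongr; exact norm_sub_le _ _)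
    _ ≤ c * ‖id x‖ := by
      rw [id, norm_of_nonneg hx0]
      have : c / 2 * (2 / c * ‖g S‖ + ‖S‖) ≤ c / 2 * x := by gcongr
      field_simp at this ⊢
      linarith

lemma tendsto_div_self_atTop_of_hasDerivAt {f f' : ℝ → ℝ} {L : ℝ}
    (hf : ∀ᶠ x in atTop, HasDerivAt f (f' x) x) (hf' : Tendsto f' atTop (𝓝 L)) :
    Tendsto (fun x => f x / x) atTop (𝓝 L) := by
  have ho : (fun x => f x - L * x) =o[atTop] id :=
    isLittleO_id_atTop_of_hasDerivAt_of_tendsto_zero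
      (hf.mono fun x hx => hx.sub ((hasDerivAt_id x).const_mul L)) (by simpa using hf'.sub_const L)
  refine (ho.tendsto_div_nhds_zero.add_const L).congr' ?_ |>.trans (by simp)
  filter_upwards [eventually_ne_atTop 0] with x hx
  simp only [id, sub_div, mul_div_cancel_right₀ _ hx, sub_add_cancel]

lemma tendsto_div_sqrt_one_add_sq_atTop :
    Tendsto (fun t : ℝ => t / √(1 + t ^ 2)) atTop (𝓝 1) := by
  have h : Tendsto (fun t : ℝ => √(t⁻¹ ^ 2 + 1)) atTop (𝓝 1) := by
    simpa using ((tendsto_inv_atTop_zero.pow 2).add_const 1).sqrt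
  have h_inv : Tendsto (fun t : ℝ => (√(t⁻¹ ^ 2 + 1))⁻¹) atTop (𝓝 1) := by
    simpa using h.inv₀ one_ne_zero
  refine h_inv.congr' ?_
  filter_upwards [eventually_gt_atTop 0] with t ht
  rw [← sqrt_inv, ← sqrt_sq (by positivity : 0 ≤ t / √(1 + t ^ 2)), div_pow,
    sq_sqrt (by positivity)]
  field_simp

lemma tendsto_rpow_neg_inv_mul_of_tendsto_rpow_div {φ : ℝ → ℝ} {α c : ℝ} (hα : 0 < α)
    (hφ : ∀ᶠ s in atTop, 0 ≤ φ s) (h : Tendsto (fun s => φ s ^ α / s) atTop (𝓝 c)) :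
    Tendsto (fun s => s ^ (-(1 / α)) * φ s) atTop (𝓝 (c ^ (1 / α))) := by
  refine (h.rpow_const (Or.inr (by positivity))).congr' ?_
  filter_upwards [hφ, eventually_gt_atTop 0] with s hφs hs
  rw [div_rpow (rpow_nonneg hφs α) hs.le, one_div, rpow_rpow_inv hφs hα.ne', rpow_neg hs.le,
    div_eq_inv_mul]

theorem stmt1_general (α k : ℝ) (hα : 1 < α) (hk : 0 < k) (φ : ℝ → ℝ)
    (hφmap : ∀ s ≥ 0, 0 ≤ φ s)
    (hmono : StrictMonoOn φ (Set.Ici 0))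
    (hdiff : Differentiable ℝ φ)
    (hODE : ∀ s ≥ 0, (deriv φ s) ^ 2 * (1 + α ^ 2 * k ^ 2 * (φ s) ^ (2 * α - 2)) = 1)
    (hinf : Tendsto φ atTop atTop) :
    Tendsto (fun s : ℝ => s ^ (-(1 / α)) * φ s) atTop (nhds (k ^ (-(1 / α)))) := by
  set u : ℝ → ℝ := fun s => k * α * φ s ^ (α - 1) with hu_def
  have hu : Tendsto u atTop atTop :=
    ((tendsto_rpow_atTop (by linarith)).comp hinf).const_mul_atTop (by positivity)
  have hφ' : ∀ s > 0, deriv φ s = 1 / √(1 + u s ^ 2) := fun s hs => by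
    have hnonneg : 0 ≤ deriv φ s := by
      rw [← derivWithin_of_mem_nhds (Ici_mem_nhds hs)]
      exact hmono.monotoneOn.derivWithin_nonneg
    have hsq : u s ^ 2 = α ^ 2 * k ^ 2 * φ s ^ (2 * α - 2) := by
      rw [hu_def, mul_pow, ← rpow_mul_natCast (hφmap s hs.le)]
      ring_nf
    rw [eq_div_iff (by positivity), ← sqrt_sq hnonneg, ← sqrt_mul (sq_nonneg _), hsq,
      hODE s hs.le, sqrt_one]
  have hkφ : ∀ s > 0, HasDerivAt (fun s => k * φ s ^ α) (u s / √(1 + u s ^ 2)) s :=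
    fun s hs => by
      refine (((hdiff s).hasDerivAt.rpow_const (Or.inr hα.le)).const_mul k).congr_deriv ?_
      rw [hφ' s hs, hu_def]
      ring
  have hlim : Tendsto (fun s => φ s ^ α / s) atTop (𝓝 (1 / k)) := by
    have := (tendsto_div_self_atTop_of_hasDerivAt ((eventually_gt_atTop 0).mono hkφ)
      (tendsto_div_sqrt_one_add_sq_atTop.comp hu)).div_const k
    refine this.congr fun s => ?_
    field_simp
  have := tendsto_rpow_neg_inv_mul_of_tendsto_rpow_div (by linarith)
    ((eventually_ge_atTop 0).mono hφmap) hlim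
  rwa [one_div k, inv_rpow hk.le, ← rpow_neg hk.le] at this

theorem stmt1 (α k : ℝ) (hα : 1 < α) (hk : 0 < k) (φ : ℝ → ℝ)
    (hφmap : ∀ s ≥ 0, 0 ≤ φ s)
    (hmono : StrictMonoOn φ (Set.Ici 0))
    (hdiff : Differentiable ℝ φ)
    (h0 : φ 0 = 0)
    (hODE : ∀ s ≥ 0, (deriv φ s) ^ 2 * (1 + α ^ 2 * k ^ 2 * (φ s) ^ (2 * α - 2)) = 1)
    (hinf : Tendsto φ atTop atTop) :
    Tendsto (fun s : ℝ => s ^ (-(1 / α)) * φ s) atTop (nhds (k ^ (-(1 / α)))) :=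
  stmt1_general α k hα hk φ hφmap hmono hdiff hODE hinf
end

section
/- Let α > 1, k > 0, and let φ : [0,∞) → [0,∞) be twice differentiable, satisfying φ'(s) = (1 + α²k²φ(s)^{2α-2})^{-1/2}, with lim_{s→∞} s^{-1/α} φ(s) = k^{-1/α}. Then lim_{s→∞} s^{(2α-1)/α} φ''(s) = -((α-1)/α²) k^{-1/α}. -/
open Real Filter Set

open scoped Topology

/-! Writing the ODE as `φ' = g ∘ φ` with `g y = (1 + a y ^ p) ^ (-1/2)`, `a = α²k²`, `p = 2α - 2`,
the chain rule gives `φ'' = g'(φ) g(φ) = -(a p / 2) φ ^ (-p-1) / (φ ^ (-p) + a) ^ 2`.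
Since `p + 1 = 2α - 1`, the weight `s ^ ((2α-1)/α)` turns `φ ^ (-p-1)` into
`(s ^ (-1/α) φ) ^ (-(2α-1))`, which tends to `k ^ ((2α-1)/α)`; and `φ ^ (-p) → 0` because
`φ → ∞`. -/

theorem hasDerivAt_deriv_of_deriv_eventuallyEq_comp {φ g : ℝ → ℝ} {s g' : ℝ}
    (hφ : DifferentiableAt ℝ φ s) (hg : HasDerivAt g g' (φ s))
    (hode : deriv φ =ᶠ[𝓝 s] g ∘ φ) : HasDerivAt (deriv φ) (g' * g (φ s)) s := by
  have h := hg.comp s hφ.hasDerivAt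
  rw [hode.eq_of_nhds] at h
  exact h.congr_of_eventuallyEq hode

theorem rpow_sub_one_div_one_add_mul_rpow_sq {y : ℝ} (hy : 0 < y) {a : ℝ} (ha : 0 ≤ a)
    (p : ℝ) : y ^ (p - 1) / (1 + a * y ^ p) ^ 2 = y ^ (-p - 1) / (y ^ (-p) + a) ^ 2 := by
  have hyp : y ^ p * y ^ (-p) = 1 := by rw [← rpow_add hy, add_neg_cancel, rpow_zero]
  have hsplit : 1 + a * y ^ p = y ^ p * (y ^ (-p) + a) := by rw [mul_add, hyp]; ring
  have hexp : y ^ (p - 1) = y ^ (-p - 1) * (y ^ p) ^ 2 := by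
    rw [← rpow_natCast, ← rpow_mul hy.le, ← rpow_add hy]; push_cast; ring_nf
  rw [hsplit, hexp, mul_pow]
  have : 0 < y ^ p := rpow_pos_of_pos hy p
  field_simp

theorem deriv_deriv_of_deriv_eq_one_add_mul_rpow {φ : ℝ → ℝ} {a p s : ℝ} (ha : 0 ≤ a)
    (hφ : DifferentiableAt ℝ φ s) (hpos : 0 < φ s)
    (hode : ∀ᶠ x in 𝓝 s, deriv φ x = (1 + a * φ x ^ p) ^ (-(1 / 2 : ℝ))) :
    deriv (deriv φ) s = -(a * p / 2) * (φ s ^ (-p - 1) / (φ s ^ (-p) + a) ^ 2) := by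
  set y := φ s
  have hA : 0 < 1 + a * y ^ p := by positivity
  have hg : HasDerivAt (fun y => (1 + a * y ^ p) ^ (-(1 / 2 : ℝ)))
      (a * (p * y ^ (p - 1)) * -(1 / 2) * (1 + a * y ^ p) ^ (-(1 / 2 : ℝ) - 1)) y :=
    (((hasDerivAt_rpow_const (Or.inl hpos.ne')).const_mul a).const_add 1).rpow_const
      (Or.inl hA.ne')
  rw [(hasDerivAt_deriv_of_deriv_eventuallyEq_comp hφ hg hode).deriv,
    ← rpow_sub_one_div_one_add_mul_rpow_sq hpos ha]
  have hpow : (1 + a * y ^ p) ^ (-(1 / 2 : ℝ) - 1) * (1 + a * y ^ p) ^ (-(1 / 2 : ℝ))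
      = ((1 + a * y ^ p) ^ 2)⁻¹ := by
    rw [← rpow_add hA, ← rpow_natCast, ← rpow_neg hA.le]; norm_num
  linear_combination (-(a * p / 2) * y ^ (p - 1)) * hpow

theorem rpow_div_mul_rpow_neg {s y : ℝ} (hs : 0 < s) (hy : 0 ≤ y) (α q : ℝ) :
    s ^ (q / α) * y ^ (-q) = (s ^ (-(1 / α)) * y) ^ (-q) := by
  rw [mul_rpow (rpow_nonneg hs.le _) hy, ← rpow_mul hs.le]
  ring_nf

theorem tendsto_atTop_of_tendsto_rpow_neg_mul {f : ℝ → ℝ} {β L : ℝ} (hβ : 0 < β)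
    (hL : 0 < L) (hf : Tendsto (fun s => s ^ (-β) * f s) atTop (𝓝 L)) :
    Tendsto f atTop atTop := by
  refine ((tendsto_rpow_atTop hβ).atTop_mul_pos hL hf).congr' ?_
  filter_upwards [eventually_gt_atTop 0] with s hs
  rw [← mul_assoc, ← rpow_add hs, add_neg_cancel, rpow_zero, one_mul]

theorem asymptotic_constant_eq {α k : ℝ} (hα : α ≠ 0) (hk : 0 < k) :
    -(α ^ 2 * k ^ 2 * (2 * α - 2) / 2) *
      ((k ^ (-(1 / α))) ^ (-(2 * α - 1)) / (α ^ 2 * k ^ 2) ^ 2) =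
      -((α - 1) / α ^ 2) * k ^ (-(1 / α)) := by
  have hpow : (k ^ (-(1 / α))) ^ (-(2 * α - 1)) = k ^ 2 * k ^ (-(1 / α)) := by
    rw [← rpow_mul hk.le, ← rpow_two, ← rpow_add hk]
    congr 1
    field_simp
    ring
  rw [hpow]
  field_simp

theorem stmt3_general (α k : ℝ) (hα : 1 < α) (hk : 0 < k) (φ : ℝ → ℝ)
    (hdiff : ContDiff ℝ 2 φ)
    (hODE : ∀ s ≥ 0, deriv φ s = (1 + α ^ 2 * k ^ 2 * (φ s) ^ (2 * α - 2)) ^ (-(1 / 2 : ℝ)))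
    (hasym : Tendsto (fun s : ℝ => s ^ (-(1 / α)) * φ s) atTop (nhds (k ^ (-(1 / α))))) :
    Tendsto (fun s : ℝ => s ^ ((2 * α - 1) / α) * deriv (deriv φ) s) atTop
      (nhds (-((α - 1) / α ^ 2) * k ^ (-(1 / α)))) := by
  have hα0 : 0 < α := by linarith
  set a := α ^ 2 * k ^ 2
  set L := k ^ (-(1 / α))
  have hL : 0 < L := rpow_pos_of_pos hk _
  have hφ_atTop : Tendsto φ atTop atTop :=
    tendsto_atTop_of_tendsto_rpow_neg_mul (by positivity) hL hasym
  have hrescale : ∀ᶠ s in atTop, -(a * (2 * α - 2) / 2) *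
      ((s ^ (-(1 / α)) * φ s) ^ (-(2 * α - 1)) / (φ s ^ (-(2 * α - 2)) + a) ^ 2) =
      s ^ ((2 * α - 1) / α) * deriv (deriv φ) s := by
    filter_upwards [eventually_gt_atTop 0, hφ_atTop.eventually_gt_atTop 0] with s hs hφs
    have hode : ∀ᶠ x in 𝓝 s, deriv φ x = (1 + a * φ x ^ (2 * α - 2)) ^ (-(1 / 2 : ℝ)) :=
      (eventually_gt_nhds hs).mono fun x hx => hODE x hx.le
    rw [deriv_deriv_of_deriv_eq_one_add_mul_rpow (by positivity)
      (hdiff.differentiable (by norm_num) s) hφs hode, ← rpow_div_mul_rpow_neg hs hφs.le,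
      show -(2 * α - 2) - 1 = -(2 * α - 1) by ring]
    ring
  have hlim : Tendsto (fun s => -(a * (2 * α - 2) / 2) *
      ((s ^ (-(1 / α)) * φ s) ^ (-(2 * α - 1)) / (φ s ^ (-(2 * α - 2)) + a) ^ 2)) atTop
      (𝓝 (-(a * (2 * α - 2) / 2) * (L ^ (-(2 * α - 1)) / (0 + a) ^ 2))) :=
    ((hasym.rpow_const (Or.inl hL.ne')).div
      ((((tendsto_rpow_neg_atTop (by linarith)).comp hφ_atTop).add_const a).pow 2)
      (by positivity)).const_mul _
  rw [zero_add] at hlim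
  rw [← asymptotic_constant_eq hα0.ne' hk]
  exact hlim.congr' hrescale

theorem stmt3 (α k : ℝ) (hα : 1 < α) (hk : 0 < k) (φ : ℝ → ℝ)
    (hφmap : ∀ s ≥ 0, 0 ≤ φ s)
    (hdiff : ContDiff ℝ 2 φ)
    (hODE : ∀ s ≥ 0, deriv φ s = (1 + α ^ 2 * k ^ 2 * (φ s) ^ (2 * α - 2)) ^ (-(1 / 2 : ℝ)))
    (hasym : Tendsto (fun s : ℝ => s ^ (-(1 / α)) * φ s) atTop (nhds (k ^ (-(1 / α))))) :
    Tendsto (fun s : ℝ => s ^ ((2 * α - 1) / α) * deriv (deriv φ) s) atTop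
      (nhds (-((α - 1) / α ^ 2) * k ^ (-(1 / α)))) :=
  stmt3_general α k hα hk φ hdiff hODE hasym
end

section
/- Let α > 1, k > 0, and let φ : [0,∞) → [0,∞) satisfy φ'(s) = (1 + α²k²φ(s)^{2α-2})^{-1/2} with lim_{s→∞} s^{-1/α} φ(s) = k^{-1/α}. Define the signed curvature γ(s) = α(α-1)k φ(s)^{α-2} φ'(s)³. Then lim_{s→∞} s^{(2α-1)/α} γ(s) exists and is finite. -/
open Real Filter Set

theorem stmt4 (α k : ℝ) (hα : 1 < α) (hk : 0 < k) (φ : ℝ → ℝ)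
    (hφmap : ∀ s ≥ 0, 0 ≤ φ s)
    (hODE : ∀ s ≥ 0, deriv φ s = (1 + α ^ 2 * k ^ 2 * (φ s) ^ (2 * α - 2)) ^ (-(1 / 2 : ℝ)))
    (hasym : Tendsto (fun s : ℝ => s ^ (-(1 / α)) * φ s) atTop (nhds (k ^ (-(1 / α)))))
    (γ : ℝ → ℝ)
    (hγ : ∀ s, γ s = α * (α - 1) * k * (φ s) ^ (α - 2) * (deriv φ s) ^ 3) :
    ∃ L : ℝ, Tendsto (fun s : ℝ => s ^ ((2 * α - 1) / α) * γ s) atTop (nhds L) := by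
  have hαpos : (0:ℝ) < α := lt_trans one_pos hα
  set c : ℝ := k ^ (-(1 / α)) with hc_def
  have hc : 0 < c := Real.rpow_pos_of_pos hk _
  -- limit pieces
  have h2 : Tendsto (fun s : ℝ => s ^ (-((2 * α - 2) / α))) atTop (nhds 0) :=
    tendsto_rpow_neg_atTop (div_pos (by linarith) hαpos)
  have h3 : Tendsto (fun s : ℝ => (s ^ (-(1 / α)) * φ s) ^ (2 * α - 2)) atTop
      (nhds (c ^ (2 * α - 2))) := hasym.rpow_const (Or.inl hc.ne')
  have hinner : Tendsto
      (fun s : ℝ => s ^ (-((2 * α - 2) / α)) + α ^ 2 * k ^ 2 * (s ^ (-(1 / α)) * φ s) ^ (2 * α - 2))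
      atTop (nhds (0 + α ^ 2 * k ^ 2 * c ^ (2 * α - 2))) :=
    h2.add (h3.const_mul _)
  have hq : (0:ℝ) < 0 + α ^ 2 * k ^ 2 * c ^ (2 * α - 2) := by
    have := Real.rpow_pos_of_pos hc (2 * α - 2)
    have hα0 : α ≠ 0 := hαpos.ne'
    positivity
  have hD : Tendsto
      (fun s : ℝ => ((s ^ (-((2 * α - 2) / α)) + α ^ 2 * k ^ 2 * (s ^ (-(1 / α)) * φ s) ^ (2 * α - 2)) ^ (-(1/2 : ℝ))))
      atTop (nhds ((0 + α ^ 2 * k ^ 2 * c ^ (2 * α - 2)) ^ (-(1/2 : ℝ)))) :=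
    hinner.rpow_const (Or.inl hq.ne')
  have hAe : Tendsto (fun s : ℝ => (s ^ (-(1 / α)) * φ s) ^ (α - 2)) atTop
      (nhds (c ^ (α - 2))) := hasym.rpow_const (Or.inl hc.ne')
  refine ⟨α * (α - 1) * k * c ^ (α - 2) *
      (((0 + α ^ 2 * k ^ 2 * c ^ (2 * α - 2)) ^ (-(1/2 : ℝ))) ^ 3), ?_⟩
  have hg : Tendsto
      (fun s : ℝ => α * (α - 1) * k * (s ^ (-(1 / α)) * φ s) ^ (α - 2) *
        (((s ^ (-((2 * α - 2) / α)) + α ^ 2 * k ^ 2 * (s ^ (-(1 / α)) * φ s) ^ (2 * α - 2)) ^ (-(1/2 : ℝ)))) ^ 3)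
      atTop (nhds (α * (α - 1) * k * c ^ (α - 2) *
      (((0 + α ^ 2 * k ^ 2 * c ^ (2 * α - 2)) ^ (-(1/2 : ℝ))) ^ 3))) :=
    (hAe.const_mul _).mul (hD.pow 3)
  refine hg.congr' ?_
  filter_upwards [eventually_ge_atTop (1:ℝ)] with s hs1
  have hs : (0:ℝ) < s := lt_of_lt_of_le one_pos hs1
  have hp : 0 ≤ φ s := hφmap s hs.le
  set p := φ s with hp_def
  have hX : (0:ℝ) < 1 + α ^ 2 * k ^ 2 * p ^ (2 * α - 2) := by
    have := Real.rpow_nonneg hp (2 * α - 2)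
    positivity
  -- rewrite products of rpow
  have eA : (s ^ (-(1 / α)) * p) ^ (α - 2) = s ^ (-(1 / α) * (α - 2)) * p ^ (α - 2) := by
    rw [Real.mul_rpow (Real.rpow_nonneg hs.le _) hp, ← Real.rpow_mul hs.le]
  have eB : (s ^ (-(1 / α)) * p) ^ (2 * α - 2) = s ^ (-((2 * α - 2) / α)) * p ^ (2 * α - 2) := by
    rw [Real.mul_rpow (Real.rpow_nonneg hs.le _) hp, ← Real.rpow_mul hs.le]
    congr 1
    field_simp
  have eInner : s ^ (-((2 * α - 2) / α)) + α ^ 2 * k ^ 2 * (s ^ (-(1 / α)) * p) ^ (2 * α - 2)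
      = s ^ (-((2 * α - 2) / α)) * (1 + α ^ 2 * k ^ 2 * p ^ (2 * α - 2)) := by
    rw [eB]; ring
  have eC : (s ^ (-((2 * α - 2) / α)) + α ^ 2 * k ^ 2 * (s ^ (-(1 / α)) * p) ^ (2 * α - 2)) ^ (-(1/2:ℝ))
      = s ^ ((α - 1) / α) * (1 + α ^ 2 * k ^ 2 * p ^ (2 * α - 2)) ^ (-(1/2:ℝ)) := by
    rw [eInner, Real.mul_rpow (Real.rpow_nonneg hs.le _) hX.le, ← Real.rpow_mul hs.le]
    congr 2
    field_simp
  have hderiv : deriv φ s = (1 + α ^ 2 * k ^ 2 * p ^ (2 * α - 2)) ^ (-(1/2:ℝ)) := hODE s hs.le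
  rw [hγ s, hderiv, eA, eC, mul_pow]
  have e3 : (s ^ ((α - 1) / α)) ^ 3 = s ^ (3 * ((α - 1) / α)) := by
    rw [← Real.rpow_natCast (s ^ ((α - 1) / α)) 3, ← Real.rpow_mul hs.le]
    norm_num
    ring_nf
  rw [e3]
  have esum : s ^ ((2 * α - 1) / α) = s ^ (-(1 / α) * (α - 2)) * s ^ (3 * ((α - 1) / α)) := by
    rw [← Real.rpow_add hs]
    congr 1
    field_simp
    ring
  rw [esum]
  ring
end

section
/- Let α > 1, k > 0, and let φ satisfy φ'(s) = (1+α²k²φ(s)^{2α-2})^{-1/2} with lim_{s→∞} s^{-1/α}φ(s) = k^{-1/α}. Define γ(s) = α(α-1)kφ(s)^{α-2}φ'(s)³. Then lim_{s→∞} s² γ(s)² = 0, i.e. γ(s) = o(1/s) as s → ∞. -/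
/-!
Along the profile, `φ' = (1 + α²k²φ^(2α-2))^(-1/2) ≤ (αk)⁻¹ φ^(1-α)`, so
`0 ≤ γ ≤ C φ^(-(2α-1))`. Since `φ(s) ≍ s^(1/α)`, this gives
`s γ(s) = O(s^(1-(2α-1)/α)) → 0` because `2α - 1 > α`.
-/

open Real Filter Set

noncomputable section

namespace GeneralizedParaboloid

/-- The slope `φ'` of the meridian, expressed through the value `y = φ` by the profile
equation. -/
def meridianSlope (α k y : ℝ) : ℝ :=
  (1 + α ^ 2 * k ^ 2 * y ^ (2 * α - 2)) ^ (-(1 / 2 : ℝ))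

def meridianCurvature (α k y : ℝ) : ℝ :=
  α * (α - 1) * k * y ^ (α - 2) * meridianSlope α k y ^ 3

variable {α k y : ℝ}

lemma meridianSlope_pos (hy : 0 ≤ y) : 0 < meridianSlope α k y :=
  rpow_pos_of_pos (by positivity) _

lemma meridianSlope_pow_three_le (hα : 0 < α) (hk : 0 < k) (hy : 0 < y) :
    meridianSlope α k y ^ 3 ≤ (α ^ 2 * k ^ 2) ^ (-(3 / 2 : ℝ)) * y ^ (-(3 * α - 3)) := by
  have ht : 0 < α ^ 2 * k ^ 2 * y ^ (2 * α - 2) := by positivity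
  calc meridianSlope α k y ^ 3 = (1 + α ^ 2 * k ^ 2 * y ^ (2 * α - 2)) ^ (-(3 / 2 : ℝ)) := by
        rw [meridianSlope, ← rpow_natCast, ← rpow_mul (by positivity)]
        norm_num
    _ ≤ (α ^ 2 * k ^ 2 * y ^ (2 * α - 2)) ^ (-(3 / 2 : ℝ)) :=
        rpow_le_rpow_of_nonpos ht (by linarith) (by norm_num)
    _ = (α ^ 2 * k ^ 2) ^ (-(3 / 2 : ℝ)) * y ^ (-(3 * α - 3)) := by
        rw [mul_rpow (by positivity) (by positivity), ← rpow_mul hy.le]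
        ring_nf

lemma meridianCurvature_nonneg (hα : 1 ≤ α) (hk : 0 ≤ k) (hy : 0 < y) :
    0 ≤ meridianCurvature α k y := by
  have hslope := meridianSlope_pos (α := α) (k := k) hy.le
  have hα' : 0 ≤ α - 1 := by linarith
  unfold meridianCurvature
  positivity

lemma meridianCurvature_le (hα : 1 ≤ α) (hk : 0 < k) (hy : 0 < y) :
    meridianCurvature α k y
      ≤ α * (α - 1) * k * (α ^ 2 * k ^ 2) ^ (-(3 / 2 : ℝ)) * y ^ (-(2 * α - 1)) := by
  have hcoef : 0 ≤ α * (α - 1) * k * y ^ (α - 2) := by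
    have hα' : 0 ≤ α - 1 := by linarith
    positivity
  calc meridianCurvature α k y
      ≤ α * (α - 1) * k * y ^ (α - 2) *
          ((α ^ 2 * k ^ 2) ^ (-(3 / 2 : ℝ)) * y ^ (-(3 * α - 3))) :=
        mul_le_mul_of_nonneg_left (meridianSlope_pow_three_le (by linarith) hk hy) hcoef
    _ = α * (α - 1) * k * (α ^ 2 * k ^ 2) ^ (-(3 / 2 : ℝ)) *
          (y ^ (α - 2) * y ^ (-(3 * α - 3))) := by
        ring
    _ = α * (α - 1) * k * (α ^ 2 * k ^ 2) ^ (-(3 / 2 : ℝ)) * y ^ (-(2 * α - 1)) := by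
        rw [← rpow_add hy]
        ring_nf

end GeneralizedParaboloid

section Asymptotics

variable {α β L : ℝ} {φ : ℝ → ℝ}

lemma eventually_pos_of_tendsto_rpow_neg_mul (hL : 0 < L)
    (hφ : Tendsto (fun s : ℝ => s ^ (-(1 / α)) * φ s) atTop (nhds L)) :
    ∀ᶠ s in atTop, 0 < φ s := by
  filter_upwards [hφ.eventually (lt_mem_nhds hL), eventually_gt_atTop 0] with s hs hs0
  exact pos_of_mul_pos_right hs (rpow_pos_of_pos hs0 _).le

lemma tendsto_mul_rpow_neg_of_tendsto_rpow_neg_mul (hα : 0 < α) (hβ : α < β) (hL : 0 < L)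
    (hφ : Tendsto (fun s : ℝ => s ^ (-(1 / α)) * φ s) atTop (nhds L)) :
    Tendsto (fun s => s * φ s ^ (-β)) atTop (nhds 0) := by
  have hlim : Tendsto (fun s : ℝ => (s ^ (-(1 / α)) * φ s) ^ (-β) * s ^ (-((β - α) / α)))
      atTop (nhds 0) := by
    simpa using (hφ.rpow_const (Or.inl hL.ne')).mul
      (tendsto_rpow_neg_atTop (div_pos (sub_pos.2 hβ) hα))
  refine hlim.congr' ?_
  filter_upwards [eventually_pos_of_tendsto_rpow_neg_mul hL hφ, eventually_gt_atTop 0]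
    with s hφs hs
  have hexp : -(1 / α) * -β + -((β - α) / α) = 1 := by field_simp; ring
  rw [mul_rpow (rpow_pos_of_pos hs _).le hφs.le, ← rpow_mul hs.le, mul_right_comm,
    ← rpow_add hs, hexp, rpow_one]

end Asymptotics

open GeneralizedParaboloid in
theorem stmt12_general (α k : ℝ) (hα : 1 < α) (hk : 0 < k) (φ : ℝ → ℝ)
    (hODE : ∀ s ≥ 0, deriv φ s = (1 + α ^ 2 * k ^ 2 * (φ s) ^ (2 * α - 2)) ^ (-(1 / 2 : ℝ)))
    (hasym : Tendsto (fun s : ℝ => s ^ (-(1 / α)) * φ s) atTop (nhds (k ^ (-(1 / α)))))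
    (γ : ℝ → ℝ)
    (hγ : ∀ s, γ s = α * (α - 1) * k * (φ s) ^ (α - 2) * (deriv φ s) ^ 3) :
    Tendsto (fun s : ℝ => s ^ 2 * (γ s) ^ 2) atTop (nhds 0) := by
  have hL : 0 < k ^ (-(1 / α)) := rpow_pos_of_pos hk _
  have hbound := (tendsto_mul_rpow_neg_of_tendsto_rpow_neg_mul (by linarith)
    (by linarith : α < 2 * α - 1) hL hasym).const_mul
      (α * (α - 1) * k * (α ^ 2 * k ^ 2) ^ (-(3 / 2 : ℝ)))
  rw [mul_zero] at hbound
  have hγφ :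
      ∀ᶠ s in atTop, 0 ≤ s ∧ 0 < φ s ∧ γ s = meridianCurvature α k (φ s) := by
    filter_upwards [eventually_pos_of_tendsto_rpow_neg_mul hL hasym, eventually_ge_atTop 0]
      with s hφs hs
    exact ⟨hs, hφs, by rw [hγ, hODE s hs, meridianCurvature, meridianSlope]⟩
  have hsγ : Tendsto (fun s => s * γ s) atTop (nhds 0) := by
    refine tendsto_of_tendsto_of_tendsto_of_le_of_le' tendsto_const_nhds hbound ?_ ?_
    · filter_upwards [hγφ] with s ⟨hs, hφs, hγs⟩
      rw [hγs]
      exact mul_nonneg hs (meridianCurvature_nonneg hα.le hk.le hφs)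
    · filter_upwards [hγφ] with s ⟨hs, hφs, hγs⟩
      rw [hγs, mul_left_comm]
      exact mul_le_mul_of_nonneg_left (meridianCurvature_le hα.le hk hφs) hs
  simpa [mul_pow] using hsγ.pow 2

theorem stmt12 (α k : ℝ) (hα : 1 < α) (hk : 0 < k) (φ : ℝ → ℝ)
    (hφmap : ∀ s ≥ 0, 0 ≤ φ s)
    (hODE : ∀ s ≥ 0, deriv φ s = (1 + α ^ 2 * k ^ 2 * (φ s) ^ (2 * α - 2)) ^ (-(1 / 2 : ℝ)))
    (hasym : Tendsto (fun s : ℝ => s ^ (-(1 / α)) * φ s) atTop (nhds (k ^ (-(1 / α)))))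
    (γ : ℝ → ℝ)
    (hγ : ∀ s, γ s = α * (α - 1) * k * (φ s) ^ (α - 2) * (deriv φ s) ^ 3) :
    Tendsto (fun s : ℝ => s ^ 2 * (γ s) ^ 2) atTop (nhds 0) :=
  stmt12_general α k hα hk φ hODE hasym γ hγ
end
end
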